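/- Define functions φ_j(x, s) recursively by φ_0(x) = (x^{k-1} + 1)·log(x)/(x - 1) (extended continuously at x = 1 to the value k, interpreting the limit) and φ_{j+1} = x·∂φ_j/∂x - (s+j)·φ_j. Then for each m there is a constant C_m such that |φ_m(x, s)| ≤ C_m (1 + |s|)^m x^{k-1} for all x ≥ 1 and s ∈ ℂ. -/

import Mathlib

open Complex

/-- The recursively defined functions φ_j(x, s):
φ₀(x) = (x^{k-1}+1) log x / (x-1) (with the removable singularity at x = 1
filled in by the value k), and φ_{j+1} = x·∂φ_j/∂x − (s+j)·φ_j. -/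
noncomputable def phiRec (k : ℕ) : ℕ → ℝ → ℂ → ℂ
  | 0, x, _ =>
      if x = 1 then (k : ℂ)
      else ((x : ℂ) ^ (k - 1) + 1) * (Real.log x : ℂ) / ((x : ℂ) - 1)
  | (j + 1), x, s =>
      (x : ℂ) * deriv (fun t : ℝ => phiRec k j t s) x - (s + j) * phiRec k j x s

/-!
In the variable `u = log x` the operator `x ∂/∂x` becomes `d/du`, so for `x ≠ 1` the function
`φ_m(e^u)` is `(D - s - m + 1) ⋯ (D - s)` applied to `φ₀(e^u)`, a combination of the derivatives
of `φ₀ ∘ exp` with coefficients of size `O((1 + |s|)^m)`. The function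
`φ₀(e^w) = (e^{(k-1)w} + 1) w / (e^w - 1)` is holomorphic on the strip `|Im w| < π` and is
`O(e^{(k-1) Re w})` on the half-strip `Re w ≥ -1, |Im w| ≤ 1`, so Cauchy's estimates on unit discs
bound its derivatives at `u ≥ 0` by `O(e^{(k-1)u}) = O(x^{k-1})`. At `x = 1`, where the definition
need not agree with the continuous extension, the value of `φ_m` is bounded inductively: the
derivative of `φ_m` at `1` is either the junk value `0` or the derivative of the smooth extension.
-/

open Filter Topology Metric Set
open scoped ContDiff

/-- `(D - s - j + 1) ⋯ (D - s - 1) (D - s) f`, where `D = d/du`. -/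
noncomputable def descPochhammerDeriv (f : ℝ → ℂ) (s : ℂ) : ℕ → ℝ → ℂ
  | 0 => f
  | j + 1 => fun u => deriv (descPochhammerDeriv f s j) u - (s + j) * descPochhammerDeriv f s j u

theorem norm_sub_add_natCast_mul_le {a b s : ℂ} {j : ℕ} {A B w : ℝ}
    (ha : ‖a‖ ≤ A * (1 + ‖s‖) ^ j * w) (hb : ‖b‖ ≤ B * (1 + ‖s‖) ^ j * w) :
    ‖a - (s + j) * b‖ ≤ (A + (j + 1) * B) * (1 + ‖s‖) ^ (j + 1) * w := by
  have hs : ‖s + j‖ ≤ (j + 1) * (1 + ‖s‖) := by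
    have := norm_nonneg s
    calc ‖s + j‖ ≤ ‖s‖ + j := by simpa using norm_add_le s j
      _ ≤ (j + 1) * (1 + ‖s‖) := by nlinarith
  have hA : 0 ≤ A * (1 + ‖s‖) ^ j * w := (norm_nonneg a).trans ha
  calc ‖a - (s + j) * b‖ ≤ ‖a‖ + ‖s + j‖ * ‖b‖ := (norm_sub_le _ _).trans_eq (by rw [norm_mul])
    _ ≤ A * (1 + ‖s‖) ^ j * w + (j + 1) * (1 + ‖s‖) * (B * (1 + ‖s‖) ^ j * w) :=
      add_le_add ha (mul_le_mul hs hb (norm_nonneg _) (by positivity))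
    _ ≤ (A + (j + 1) * B) * (1 + ‖s‖) ^ (j + 1) * w := by
      rw [pow_succ]
      linear_combination le_mul_of_one_le_right hA (le_add_of_nonneg_right (norm_nonneg s))

section descPochhammerDeriv

variable {f : ℝ → ℂ}

theorem contDiff_descPochhammerDeriv (hf : ContDiff ℝ ∞ f) (s : ℂ) :
    ∀ j, ContDiff ℝ ∞ (descPochhammerDeriv f s j)
  | 0 => hf
  | j + 1 => (contDiff_infty_iff_deriv.mp (contDiff_descPochhammerDeriv hf s j)).2.sub
      (contDiff_const.mul (contDiff_descPochhammerDeriv hf s j))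

theorem iteratedDeriv_descPochhammerDeriv_succ (hf : ContDiff ℝ ∞ f) (s : ℂ) (j i : ℕ) (u : ℝ) :
    iteratedDeriv i (descPochhammerDeriv f s (j + 1)) u =
      iteratedDeriv (i + 1) (descPochhammerDeriv f s j) u
        - (s + j) * iteratedDeriv i (descPochhammerDeriv f s j) u := by
  have hi : (i : WithTop ℕ∞) ≤ ∞ := by exact_mod_cast le_top
  have h := (contDiff_descPochhammerDeriv hf s j).of_le hi
  have h' := (contDiff_infty_iff_deriv.mp (contDiff_descPochhammerDeriv hf s j)).2.of_le hi
  rw [descPochhammerDeriv, iteratedDeriv_fun_sub h'.contDiffAt (contDiff_const.mul h).contDiffAt,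
    iteratedDeriv_const_mul _ h.contDiffAt, iteratedDeriv_succ']

theorem exists_norm_iteratedDeriv_descPochhammerDeriv_le (hf : ContDiff ℝ ∞ f) {A : Set ℝ}
    {w : ℝ → ℝ} (hbound : ∀ i, ∃ C, ∀ u ∈ A, ‖iteratedDeriv i f u‖ ≤ C * w u) (j i : ℕ) :
    ∃ C, ∀ s : ℂ, ∀ u ∈ A,
      ‖iteratedDeriv i (descPochhammerDeriv f s j) u‖ ≤ C * (1 + ‖s‖) ^ j * w u := by
  induction j generalizing i with
  | zero => simpa [descPochhammerDeriv] using hbound i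
  | succ j ih =>
    obtain ⟨C₁, h₁⟩ := ih (i + 1)
    obtain ⟨C₂, h₂⟩ := ih i
    refine ⟨C₁ + (j + 1) * C₂, fun s u hu => ?_⟩
    rw [iteratedDeriv_descPochhammerDeriv_succ hf]
    exact norm_sub_add_natCast_mul_le (h₁ s u hu) (h₂ s u hu)

end descPochhammerDeriv

theorem norm_deriv_le_of_eventuallyEq_nhdsNE {𝕜 F : Type*} [NontriviallyNormedField 𝕜]
    [NormedAddCommGroup F] [NormedSpace 𝕜 F] {f g : 𝕜 → F} {a : 𝕜} (hfg : f =ᶠ[𝓝[≠] a] g)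
    (hg : DifferentiableAt 𝕜 g a) : ‖deriv f a‖ ≤ ‖deriv g a‖ := by
  by_cases hf : DifferentiableAt 𝕜 f a
  · rw [((hf.continuousAt.eventuallyEq_nhds_iff_eventuallyEq_nhdsNE hg.continuousAt).mp
      hfg).deriv_eq]
  · simp [deriv_zero_of_not_differentiableAt hf]

theorem iteratedDeriv_comp_ofReal {f : ℂ → ℂ} {U : Set ℂ} (hf : AnalyticOnNhd ℂ f U)
    (hU : ∀ u : ℝ, (u : ℂ) ∈ U) (n : ℕ) :
    iteratedDeriv n (fun u : ℝ => f u) = fun u : ℝ => iteratedDeriv n f u := by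
  induction n with
  | zero => simp
  | succ n ih =>
    ext u
    rw [iteratedDeriv_succ, ih, iteratedDeriv_succ]
    have h := (hf.iterated_deriv n _ (hU u)).differentiableAt
    rw [← iteratedDeriv_eq_iterate] at h
    exact h.hasDerivAt.comp_ofReal.deriv

theorem contDiff_comp_ofReal {f : ℂ → ℂ} {U : Set ℂ} (hf : AnalyticOnNhd ℂ f U)
    (hU : ∀ u : ℝ, (u : ℂ) ∈ U) : ContDiff ℝ ∞ (fun u : ℝ => f u) :=
  contDiff_iff_contDiffAt.mpr fun u =>
    ((hf u (hU u)).contDiffAt.restrict_scalars ℝ).comp u ofRealCLM.contDiff.contDiffAt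

theorem differentiableOn_dslope_log : DifferentiableOn ℂ (dslope log 1) slitPlane :=
  (differentiableOn_dslope (isOpen_slitPlane.mem_nhds one_mem_slitPlane)).mpr
    fun _ hz => (differentiableAt_log hz).differentiableWithinAt

theorem mem_expSource_of_abs_im_le_one {w : ℂ} (h : |w.im| ≤ 1) :
    w ∈ expOpenPartialHomeomorph.source := by
  have := Real.pi_gt_three
  obtain ⟨h₁, h₂⟩ := abs_le.mp h
  exact ⟨by linarith, by linarith⟩

theorem abs_re_sub_le_and_abs_im_le {u : ℝ} {w : ℂ} (hw : w ∈ closedBall (u : ℂ) 1) :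
    |w.re - u| ≤ 1 ∧ |w.im| ≤ 1 := by
  rw [mem_closedBall, dist_eq] at hw
  exact ⟨by simpa using (abs_re_le_norm (w - u)).trans hw,
    by simpa using (abs_im_le_norm (w - u)).trans hw⟩

theorem norm_dslope_log_exp_le_one {w : ℂ} (hre : 2 ≤ w.re) (him : |w.im| ≤ 1) :
    ‖dslope log 1 (exp w)‖ ≤ 1 := by
  have hπ := Real.pi_gt_three
  obtain ⟨him₁, him₂⟩ := abs_le.mp him
  have hexp : w.re + 1 ≤ ‖exp w - 1‖ := by
    have h := norm_sub_norm_le (exp w) 1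
    rw [norm_exp, norm_one] at h
    nlinarith [Real.quadratic_le_exp_of_nonneg (by linarith : 0 ≤ w.re)]
  have hw : ‖w‖ ≤ w.re + 1 := by
    calc ‖w‖ ≤ |w.re| + |w.im| := norm_le_abs_re_add_abs_im w
      _ ≤ w.re + 1 := by rw [abs_of_nonneg (by linarith)]; linarith
  have hne : exp w ≠ 1 := fun h => by simp [h] at hexp; linarith
  rw [dslope_of_ne _ hne, slope_def_module, log_one, sub_zero, log_exp (by linarith) (by linarith),
    smul_eq_mul, norm_mul, norm_inv, inv_mul_le_one₀ (by linarith)]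
  exact hw.trans hexp

theorem exists_norm_dslope_log_exp_le :
    ∃ M, ∀ w : ℂ, -1 ≤ w.re → |w.im| ≤ 1 → ‖dslope log 1 (exp w)‖ ≤ M := by
  have hK : IsCompact (Icc (-1 : ℝ) 2 ×ℂ Icc (-1) 1) := isCompact_Icc.reProdIm isCompact_Icc
  have hcont : ContinuousOn (fun w => dslope log 1 (exp w)) (Icc (-1 : ℝ) 2 ×ℂ Icc (-1) 1) :=
    differentiableOn_dslope_log.continuousOn.comp continuous_exp.continuousOn fun w hw =>
      expOpenPartialHomeomorph.map_source (mem_expSource_of_abs_im_le_one (abs_le.mpr hw.2))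
  obtain ⟨M, hM⟩ := hK.exists_bound_of_continuousOn hcont
  refine ⟨max M 1, fun w hre him => ?_⟩
  rcases le_total w.re 2 with h | h
  · exact (hM w ⟨⟨hre, h⟩, abs_le.mp him⟩).trans (le_max_left _ _)
  · exact (norm_dslope_log_exp_le_one h him).trans (le_max_right _ _)

/-- `φ₀(e^w)` for `φ₀` with exponent `n = k - 1`; `dslope` fills in the removable singularity
of `log z / (z - 1)` at `z = 1`. -/
noncomputable def phiZeroExp (n : ℕ) (w : ℂ) : ℂ := (exp w ^ n + 1) * dslope log 1 (exp w)

theorem analyticOnNhd_phiZeroExp (n : ℕ) :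
    AnalyticOnNhd ℂ (phiZeroExp n) expOpenPartialHomeomorph.source :=
  DifferentiableOn.analyticOnNhd (((differentiable_exp.pow n).add_const 1).differentiableOn.mul
    (differentiableOn_dslope_log.comp differentiable_exp.differentiableOn
      fun _ hw => expOpenPartialHomeomorph.map_source hw)) expOpenPartialHomeomorph.open_source

theorem exists_norm_iteratedDeriv_phiZeroExp_le (n i : ℕ) :
    ∃ C, ∀ u : ℝ, 0 ≤ u → ‖iteratedDeriv i (phiZeroExp n) u‖ ≤ C * Real.exp u ^ n := by
  obtain ⟨M, hM⟩ := exists_norm_dslope_log_exp_le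
  refine ⟨i.factorial * (2 * Real.exp 1 ^ n * M), fun u hu => ?_⟩
  have hsphere : ∀ w ∈ sphere (u : ℂ) 1,
      ‖phiZeroExp n w‖ ≤ 2 * Real.exp 1 ^ n * M * Real.exp u ^ n := by
    intro w hw
    obtain ⟨hre, him⟩ := abs_re_sub_le_and_abs_im_le (sphere_subset_closedBall hw)
    obtain ⟨hre₁, hre₂⟩ := abs_le.mp hre
    have hMw := hM w (by linarith) him
    have hpow : ‖exp w ^ n + 1‖ ≤ 2 * Real.exp 1 ^ n * Real.exp u ^ n := by
      have h1 : 1 ≤ Real.exp 1 * Real.exp u := one_le_mul_of_one_le_of_one_le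
        (Real.one_le_exp zero_le_one) (Real.one_le_exp hu)
      calc ‖exp w ^ n + 1‖ ≤ Real.exp w.re ^ n + 1 := by
            simpa [norm_exp] using norm_add_le (exp w ^ n) 1
        _ ≤ (Real.exp 1 * Real.exp u) ^ n + (Real.exp 1 * Real.exp u) ^ n := by
            gcongr
            · rw [← Real.exp_add]; exact Real.exp_le_exp.mpr (by linarith)
            · exact one_le_pow₀ h1
        _ = 2 * Real.exp 1 ^ n * Real.exp u ^ n := by ring
    calc ‖phiZeroExp n w‖ = ‖exp w ^ n + 1‖ * ‖dslope log 1 (exp w)‖ := norm_mul _ _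
      _ ≤ 2 * Real.exp 1 ^ n * Real.exp u ^ n * M :=
        mul_le_mul hpow hMw (norm_nonneg _) (by positivity)
      _ = 2 * Real.exp 1 ^ n * M * Real.exp u ^ n := by ring
  have hdiff : DiffContOnCl ℂ (phiZeroExp n) (ball (u : ℂ) 1) :=
    (analyticOnNhd_phiZeroExp n).differentiableOn.diffContOnCl_ball fun _ hw =>
      mem_expSource_of_abs_im_le_one (abs_re_sub_le_and_abs_im_le hw).2
  refine (norm_iteratedDeriv_le_of_forall_mem_sphere_norm_le i one_pos hdiff hsphere).trans_eq ?_
  ring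

theorem contDiff_phiZeroExp_ofReal (n : ℕ) : ContDiff ℝ ∞ (fun u : ℝ => phiZeroExp n u) :=
  contDiff_comp_ofReal (analyticOnNhd_phiZeroExp n) fun u =>
    mem_expSource_of_abs_im_le_one (by simp)

theorem exists_norm_iteratedDeriv_descPochhammerDeriv_phiZeroExp_le (n j i : ℕ) :
    ∃ C, ∀ s : ℂ, ∀ u : ℝ, 0 ≤ u →
      ‖iteratedDeriv i (descPochhammerDeriv (fun u : ℝ => phiZeroExp n u) s j) u‖ ≤
        C * (1 + ‖s‖) ^ j * Real.exp u ^ n := by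
  refine exists_norm_iteratedDeriv_descPochhammerDeriv_le (A := Ici 0)
    (contDiff_phiZeroExp_ofReal n) (fun i => ?_) j i
  rw [iteratedDeriv_comp_ofReal (analyticOnNhd_phiZeroExp n)
    fun u => mem_expSource_of_abs_im_le_one (by simp)]
  exact exists_norm_iteratedDeriv_phiZeroExp_le n i

theorem phiRec_zero_eq_phiZeroExp (k : ℕ) {x : ℝ} (hx : 0 < x) (hx1 : x ≠ 1) (s : ℂ) :
    phiRec k 0 x s = phiZeroExp (k - 1) (Real.log x) := by
  have hexp : exp (Real.log x) = x := by rw [← ofReal_exp, Real.exp_log hx]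
  have hxC : (x : ℂ) ≠ 1 := by exact_mod_cast hx1
  rw [phiRec, if_neg hx1, phiZeroExp, hexp, dslope_of_ne _ hxC, slope_def_module, log_one,
    sub_zero, ← ofReal_log hx.le, smul_eq_mul, div_eq_mul_inv]
  ring

theorem phiRec_eq_descPochhammerDeriv (k j : ℕ) {x : ℝ} (hx : 0 < x) (hx1 : x ≠ 1) (s : ℂ) :
    phiRec k j x s =
      descPochhammerDeriv (fun u : ℝ => phiZeroExp (k - 1) u) s j (Real.log x) := by
  induction j generalizing x with
  | zero => exact phiRec_zero_eq_phiZeroExp k hx hx1 s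
  | succ j ih =>
    set ψ := descPochhammerDeriv (fun u : ℝ => phiZeroExp (k - 1) u) s j
    have hψ : Differentiable ℝ ψ :=
      (contDiff_descPochhammerDeriv (contDiff_phiZeroExp_ofReal _) s j).differentiable (by simp)
    have hloc : (fun t => phiRec k j t s) =ᶠ[𝓝 x] ψ ∘ Real.log :=
      (((isOpen_lt continuous_const continuous_id).inter isOpen_ne).eventually_mem
        ⟨hx, hx1⟩).mono fun t ht => ih ht.1 ht.2
    have hderiv : deriv (fun t => phiRec k j t s) x = x⁻¹ • deriv ψ (Real.log x) := by
      rw [hloc.deriv_eq]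
      exact ((hψ _).hasDerivAt.scomp x (Real.hasDerivAt_log hx.ne')).deriv
    rw [phiRec, hderiv, ih hx hx1, descPochhammerDeriv, real_smul, ofReal_inv,
      mul_inv_cancel_left₀ (by exact_mod_cast hx.ne')]

theorem exists_norm_phiRec_one_le (k m : ℕ) :
    ∃ C, ∀ s : ℂ, ‖phiRec k m 1 s‖ ≤ C * (1 + ‖s‖) ^ m := by
  induction m with
  | zero => exact ⟨k, fun s => by simp [phiRec]⟩
  | succ m ih =>
    obtain ⟨C, hC⟩ := ih
    obtain ⟨D, hD⟩ := exists_norm_iteratedDeriv_descPochhammerDeriv_phiZeroExp_le (k - 1) m 1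
    refine ⟨D + (m + 1) * C, fun s => ?_⟩
    set ψ := descPochhammerDeriv (fun u : ℝ => phiZeroExp (k - 1) u) s m
    have hψ : Differentiable ℝ ψ :=
      (contDiff_descPochhammerDeriv (contDiff_phiZeroExp_ofReal _) s m).differentiable (by simp)
    have hloc : (fun t => phiRec k m t s) =ᶠ[𝓝[≠] 1] ψ ∘ Real.log := by
      filter_upwards [eventually_nhdsWithin_of_eventually_nhds (eventually_gt_nhds one_pos),
        self_mem_nhdsWithin] with t ht ht1
      exact phiRec_eq_descPochhammerDeriv k m ht ht1 s
    have hlog := Real.hasDerivAt_log one_ne_zero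
    have hderiv : ‖deriv (fun t => phiRec k m t s) 1‖ ≤ D * (1 + ‖s‖) ^ m * 1 := by
      refine (norm_deriv_le_of_eventuallyEq_nhdsNE hloc
        ((hψ _).comp _ hlog.differentiableAt)).trans ?_
      rw [((hψ _).hasDerivAt.scomp 1 hlog).deriv]
      simpa using hD s 0 le_rfl
    have hone : ‖phiRec k m 1 s‖ ≤ C * (1 + ‖s‖) ^ m * 1 := by simpa using hC s
    simpa [phiRec] using norm_sub_add_natCast_mul_le hderiv hone

theorem phiRec_bound_general (k : ℕ) (m : ℕ) :
    ∃ C : ℝ, ∀ x : ℝ, 1 ≤ x → ∀ s : ℂ,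
      ‖phiRec k m x s‖ ≤ C * (1 + ‖s‖) ^ m * x ^ (k - 1) := by
  obtain ⟨C₁, h₁⟩ := exists_norm_iteratedDeriv_descPochhammerDeriv_phiZeroExp_le (k - 1) m 0
  obtain ⟨C₂, h₂⟩ := exists_norm_phiRec_one_le k m
  refine ⟨max C₁ C₂, fun x hx s => ?_⟩
  rcases hx.eq_or_lt with rfl | hx
  · calc ‖phiRec k m 1 s‖ ≤ C₂ * (1 + ‖s‖) ^ m := h₂ s
      _ ≤ max C₁ C₂ * (1 + ‖s‖) ^ m * 1 ^ (k - 1) := by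
        rw [one_pow, mul_one]; gcongr; exact le_max_right _ _
  · have h := h₁ s (Real.log x) (Real.log_nonneg hx.le)
    rw [iteratedDeriv_zero, Real.exp_log (by linarith)] at h
    rw [phiRec_eq_descPochhammerDeriv k m (by linarith) hx.ne' s]
    refine h.trans ?_
    gcongr
    exact le_max_left _ _

theorem phiRec_bound (k : ℕ) (hk : 1 ≤ k) (m : ℕ) :
    ∃ C : ℝ, ∀ x : ℝ, 1 ≤ x → ∀ s : ℂ,
      ‖phiRec k m x s‖ ≤ C * (1 + ‖s‖) ^ m * x ^ (k - 1) :=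
  phiRec_bound_general k m
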